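/- arXiv:2507.20339 — 4 statements merged into one kernel-verified Lean document; each statement's English description precedes it below -/
import Mathlib

section
/- If x, y ∈ SOL(Θ, q) and for every index i with x_i > 0 and (Ψ(x)+q)_i = 0 one has (Ψ(y)+q)_i = 0 whenever y_i > 0, then any accumulation point x of a sequence of solutions x^{(k)} ∈ SOL(Θ,q) satisfies (x^{(k)} - x) * (Ψ(x^{(k)}) - Ψ(x)) = 0 for all sufficiently large k. -/
noncomputable def tMap {n : ℕ} (r : ℕ) (a : Fin n → (Fin r → Fin n) → ℝ)
    (x : Fin n → ℝ) : Fin n → ℝ :=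
  fun i => ∑ j : Fin r → Fin n, a i j * ∏ t, x (j t)

noncomputable def Psi {n m : ℕ}
    (A : (k : Fin (m - 1)) → Fin n → (Fin (m - 1 - (k : ℕ)) → Fin n) → ℝ)
    (x : Fin n → ℝ) : Fin n → ℝ :=
  fun i => ∑ k : Fin (m - 1), tMap (m - 1 - (k : ℕ)) (A k) x i

noncomputable def SOL {n m : ℕ}
    (A : (k : Fin (m - 1)) → Fin n → (Fin (m - 1 - (k : ℕ)) → Fin n) → ℝ)
    (q : Fin n → ℝ) : Set (Fin n → ℝ) :=
  {x | (∀ i, 0 ≤ x i) ∧ (∀ i, 0 ≤ Psi A x i + q i) ∧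
    ∑ i, x i * (Psi A x i + q i) = 0}

open Filter Topology

/-- One coordinate of the theorem, with `u k = x⁽ᵏ⁾ᵢ` and `v k = (Ψ(x⁽ᵏ⁾) + q)ᵢ`.
If `a > 0` then `b = 0` and eventually `u k > 0`, so `v k = b` by compatibility;
if `a = 0 ≠ b` then eventually `v k ≠ 0`, so `u k = a`;
if `a = b = 0` complementarity of `(u k, v k)` is the claim. -/
lemma eventually_sub_mul_sub_eq_zero_of_complementary {α : Type*} {l : Filter α}
    {u v : α → ℝ} {a b : ℝ} (hu : Tendsto u l (𝓝 a)) (hv : Tendsto v l (𝓝 b))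
    (hcompl : ∀ k, u k * v k = 0) (ha : 0 ≤ a) (hab : a * b = 0)
    (hcompat : ∀ k, 0 < a → b = 0 → 0 < u k → v k = 0) :
    ∀ᶠ k in l, (u k - a) * (v k - b) = 0 := by
  rcases ha.lt_or_eq with ha | rfl
  · have hb : b = 0 := (mul_eq_zero.1 hab).resolve_left ha.ne'
    filter_upwards [hu.eventually (lt_mem_nhds ha)] with k hk
    rw [hcompat k ha hb hk, hb, sub_self, mul_zero]
  · rcases eq_or_ne b 0 with rfl | hb
    · simpa using Eventually.of_forall hcompl
    · filter_upwards [hv.eventually_ne hb] with k hk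
      rw [(mul_eq_zero.1 (hcompl k)).resolve_right hk, sub_self, zero_mul]

@[fun_prop]
lemma continuous_tMap {n : ℕ} (r : ℕ) (a : Fin n → (Fin r → Fin n) → ℝ) :
    Continuous (tMap r a) := by
  unfold tMap
  fun_prop

lemma continuous_Psi {n m : ℕ}
    (A : (k : Fin (m - 1)) → Fin n → (Fin (m - 1 - (k : ℕ)) → Fin n) → ℝ) :
    Continuous (Psi A) := by
  unfold Psi
  fun_prop

lemma mul_Psi_add_eq_zero_of_mem_SOL {n m : ℕ}
    {A : (k : Fin (m - 1)) → Fin n → (Fin (m - 1 - (k : ℕ)) → Fin n) → ℝ}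
    {q y : Fin n → ℝ} (hy : y ∈ SOL A q) (i : Fin n) :
    y i * (Psi A y i + q i) = 0 :=
  (Finset.sum_eq_zero_iff_of_nonneg fun j _ => mul_nonneg (hy.1 j) (hy.2.1 j)).1 hy.2.2 i
    (Finset.mem_univ i)

/-- Key lemma: if `x⁽ᵏ⁾ ∈ SOL(Θ,q)` is a sequence of solutions converging to a
solution `x ∈ SOL(Θ,q)` (and solutions satisfy the componentwise complementarity
compatibility condition), then `(x⁽ᵏ⁾ - x) * (Ψ(x⁽ᵏ⁾) - Ψ(x)) = 0` for all
sufficiently large `k`. -/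
theorem eventually_hadamard_zero {n m : ℕ}
    (A : (k : Fin (m - 1)) → Fin n → (Fin (m - 1 - (k : ℕ)) → Fin n) → ℝ)
    (q : Fin n → ℝ) (xs : ℕ → Fin n → ℝ) (x : Fin n → ℝ)
    (hxs : ∀ k, xs k ∈ SOL A q) (hx : x ∈ SOL A q)
    (hcompat : ∀ y ∈ SOL A q, ∀ i, 0 < x i → Psi A x i + q i = 0 →
      0 < y i → Psi A y i + q i = 0)
    (hlim : Filter.Tendsto xs Filter.atTop (nhds x)) :
    ∃ k₀ : ℕ, ∀ k ≥ k₀, ∀ i,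
      (xs k i - x i) * (Psi A (xs k) i - Psi A x i) = 0 := by
  have hPsi : Tendsto (fun k => Psi A (xs k)) atTop (𝓝 (Psi A x)) :=
    ((continuous_Psi A).tendsto x).comp hlim
  have hcoord : ∀ i, ∀ᶠ k in atTop,
      (xs k i - x i) * ((Psi A (xs k) i + q i) - (Psi A x i + q i)) = 0 := fun i =>
    eventually_sub_mul_sub_eq_zero_of_complementary (tendsto_pi_nhds.1 hlim i)
      ((tendsto_pi_nhds.1 hPsi i).add_const (q i))
      (fun k => mul_Psi_add_eq_zero_of_mem_SOL (hxs k) i) (hx.1 i)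
      (mul_Psi_add_eq_zero_of_mem_SOL hx i) (fun k => hcompat (xs k) (hxs k) i)
  simp only [add_sub_add_right_eq_sub] at hcoord
  exact eventually_atTop.1 (eventually_all.2 hcoord)
end

section
/- Let m be even and A a matrix-based tensor with A x^{m-1} = (Â x)^{[m-1]}. Then for every q ∈ ℝⁿ, SOL(A, q) = SOL(Â, q^{[1/(m-1)]}), i.e., x solves the tensor complementarity problem (x ≥ 0, A x^{m-1} + q ≥ 0, xᵀ(A x^{m-1}+q)=0) if and only if x solves the linear complementarity problem with matrix Â and vector q^{[1/(m-1)]} whose i-th entry is the real (m-1)-th root of q_i. -/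
/-!
Since `m - 1` is odd, `t ↦ t ^ (m - 1)` is a strictly monotone bijection of `ℝ` that commutes
with negation. Hence `a ^ (m - 1) + b ^ (m - 1)` has the same sign as `a + b`, so with
`a = (Â x)ᵢ` and `b = pᵢ` the two complementarity problems impose the same conditions
coordinatewise, and a complementarity condition is a coordinatewise one because its sum has
nonnegative terms.
-/

section OddPow

variable {R : Type*} [Ring R] [LinearOrder R] [IsStrictOrderedRing R] {k : ℕ}

theorem Odd.pow_add_pow_nonneg_iff (hk : Odd k) (a b : R) :
    0 ≤ a ^ k + b ^ k ↔ 0 ≤ a + b := by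
  rw [← neg_le_iff_add_nonneg', ← neg_le_iff_add_nonneg', ← hk.neg_pow,
    hk.strictMono_pow.le_iff_le]

theorem Odd.pow_add_pow_eq_zero_iff (hk : Odd k) (a b : R) :
    a ^ k + b ^ k = 0 ↔ a + b = 0 := by
  rw [add_eq_zero_iff_eq_neg, add_eq_zero_iff_eq_neg, ← hk.neg_pow,
    hk.strictMono_pow.injective.eq_iff]

end OddPow

theorem complementarity_iff_forall {ι R : Type*} [Fintype ι] [Semiring R] [PartialOrder R]
    [IsOrderedRing R] {x w : ι → R} :
    ((∀ i, 0 ≤ x i) ∧ (∀ i, 0 ≤ w i) ∧ ∑ i, x i * w i = 0) ↔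
      ∀ i, 0 ≤ x i ∧ 0 ≤ w i ∧ x i * w i = 0 := by
  refine ⟨fun ⟨hx, hw, hsum⟩ i => ⟨hx i, hw i, ?_⟩, fun h => ⟨fun i => (h i).1,
    fun i => (h i).2.1, Finset.sum_eq_zero fun i _ => (h i).2.2⟩⟩
  exact (Finset.sum_eq_zero_iff_of_nonneg fun j _ => mul_nonneg (hx j) (hw j)).mp hsum i
    (Finset.mem_univ i)

/-- For a matrix-based tensor `A` of even order `m` with `A x^{m-1} = (Â x)^{[m-1]}`,
and any `q ∈ ℝⁿ`, the solution set of `TCP(A,q)` coincides with the solution set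
of the LCP with matrix `Â` and vector `q^{[1/(m-1)]}` whose `i`-th entry `p i`
is the real `(m-1)`-th root of `q i`. -/
theorem matrixBased_SOL_eq {n m : ℕ} (hm : 2 ≤ m) (hmeven : Even m)
    (Ahat : Matrix (Fin n) (Fin n) ℝ) (A : (Fin n → ℝ) → Fin n → ℝ)
    (hA : ∀ x : Fin n → ℝ, ∀ i, A x i = (Ahat.mulVec x i) ^ (m - 1))
    (q p : Fin n → ℝ) (hp : ∀ i, (p i) ^ (m - 1) = q i) :
    ∀ x : Fin n → ℝ,
      ((∀ i, 0 ≤ x i) ∧ (∀ i, 0 ≤ A x i + q i) ∧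
        ∑ i, x i * (A x i + q i) = 0) ↔
      ((∀ i, 0 ≤ x i) ∧ (∀ i, 0 ≤ Ahat.mulVec x i + p i) ∧
        ∑ i, x i * (Ahat.mulVec x i + p i) = 0) := by
  intro x
  have hodd : Odd (m - 1) := Nat.Even.sub_odd (by omega) hmeven odd_one
  obtain rfl : q = fun i => p i ^ (m - 1) := funext fun i => (hp i).symm
  rw [complementarity_iff_forall, complementarity_iff_forall]
  refine forall_congr' fun i => ?_
  rw [hA, hodd.pow_add_pow_nonneg_iff, mul_eq_zero, mul_eq_zero, hodd.pow_add_pow_eq_zero_iff]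
end

section
/- For every q ∈ ℝ², the set SOL = { x ∈ ℝ² : x ≥ 0, Ψ(x)+q ≥ 0, xᵀ(Ψ(x)+q) = 0 } with Ψ(x) = (x₁³+x₂³+x₁²+x₁, -x₂³+x₂) is finite. -/
/-! Complementarity `x ≥ 0`, `Ψ(x) + q ≥ 0`, `xᵀ(Ψ(x) + q) = 0` forces `xᵢ (Ψ(x) + q)ᵢ = 0` for each
coordinate. The second coordinate of `Ψ` involves only `x₂`, so `x₂` is `0` or a root of the cubic
`-t³ + t + q₂`; once `x₂` is fixed, `x₁` is `0` or a root of the cubic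
`t³ + t² + t + (x₂³ + q₁)`. Nonzero polynomials have finitely many roots. -/

namespace Cubic

variable {R : Type*} [CommRing R] [IsDomain R]

theorem finite_setOf_eq_zero {a : R} (ha : a ≠ 0) (b c d : R) :
    {x : R | a * x ^ 3 + b * x ^ 2 + c * x + d = 0}.Finite := by
  convert Polynomial.finite_setOfPred_isRoot (ne_zero_of_a_ne_zero (P := ⟨a, b, c, d⟩) ha) using 2
  simp [toPoly]

theorem finite_setOf_mul_eq_zero {a : R} (ha : a ≠ 0) (b c d : R) :
    {x : R | x * (a * x ^ 3 + b * x ^ 2 + c * x + d) = 0}.Finite :=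
  ((finite_setOf_eq_zero ha b c d).insert 0).subset fun _ hx => mul_eq_zero.1 hx

end Cubic

/-- For every `q ∈ ℝ²`, the PCP solution set with
`Ψ(x) = (x₁³+x₂³+x₁²+x₁, -x₂³+x₂)` is finite. -/
theorem example_finiteness_property :
    ∀ q₁ q₂ : ℝ,
      Set.Finite {x : ℝ × ℝ | 0 ≤ x.1 ∧ 0 ≤ x.2 ∧
        0 ≤ x.1 ^ 3 + x.2 ^ 3 + x.1 ^ 2 + x.1 + q₁ ∧
        0 ≤ -x.2 ^ 3 + x.2 + q₂ ∧
        x.1 * (x.1 ^ 3 + x.2 ^ 3 + x.1 ^ 2 + x.1 + q₁) +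
          x.2 * (-x.2 ^ 3 + x.2 + q₂) = 0} := by
  intro q₁ q₂
  refine Set.Finite.of_finite_fibers Prod.snd ?_ fun b _ => ?_
  · refine (Cubic.finite_setOf_mul_eq_zero (neg_ne_zero.2 one_ne_zero) 0 1 q₂).subset ?_
    rintro _ ⟨x, ⟨h₁, h₂, hΨ₁, hΨ₂, hx⟩, rfl⟩
    have complementary₂ :=
      ((add_eq_zero_iff_of_nonneg (mul_nonneg h₁ hΨ₁) (mul_nonneg h₂ hΨ₂)).1 hx).2
    simp only [Set.mem_ofPred_eq]
    linear_combination complementary₂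
  · refine ((Cubic.finite_setOf_mul_eq_zero one_ne_zero 1 1 (b ^ 3 + q₁)).image (·, b)).subset ?_
    rintro ⟨a, b'⟩ ⟨⟨h₁, h₂, hΨ₁, hΨ₂, hx⟩, rfl : b' = b⟩
    have complementary₁ :=
      ((add_eq_zero_iff_of_nonneg (mul_nonneg h₁ hΨ₁) (mul_nonneg h₂ hΨ₂)).1 hx).1
    refine ⟨a, ?_, rfl⟩
    simp only [Set.mem_ofPred_eq]
    linear_combination complementary₁
end

section
/- The tensor tuple on ℝ³ with Ψ(x) = (x₁³+x₁, x₂²+x₃², x₂²+x₃²) is non-degenerate, but for q = (0,-1,-1) the solution set SOL(Θ,q) is infinite: every vector (0, cos t, sin t) with 0 ≤ t ≤ π/2 is a solution. Hence a non-degenerate tensor tuple need not have the finiteness property. -/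
/-!
Non-degeneracy: `x₁ (x₁³ + x₁) = x₁² (x₁² + 1)` vanishes only at `x₁ = 0`, and summing
`x₂ s = 0` and `x₃ s = 0` with weights `x₂, x₃`, where `s = x₂² + x₃²`, gives `s² = 0`.
Infinitude: at `x = (0, a, b)` with `a, b ≥ 0` and `a² + b² = 1` we get `Ψ(x) + q = 0`,
and `t ↦ (0, cos t, sin t)` is injective on `[0, π/2]` because `cos` is.
-/

open Real Set

section NonDegenerate

variable {R : Type*} [CommRing R] [LinearOrder R] [IsStrictOrderedRing R]

theorem eq_zero_of_mul_pow_three_add_self_eq_zero {a : R} (h : a * (a ^ 3 + a) = 0) :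
    a = 0 := by
  have hfactor : a ^ 2 * (a ^ 2 + 1) = 0 := by linear_combination h
  have hpos : a ^ 2 + 1 ≠ 0 := by positivity
  exact pow_eq_zero_iff two_ne_zero |>.mp ((mul_eq_zero.mp hfactor).resolve_right hpos)

theorem eq_zero_and_eq_zero_of_mul_sq_add_sq_eq_zero {a b : R}
    (ha : a * (a ^ 2 + b ^ 2) = 0) (hb : b * (a ^ 2 + b ^ 2) = 0) : a = 0 ∧ b = 0 := by
  have hsq : (a ^ 2 + b ^ 2) * (a ^ 2 + b ^ 2) = 0 := by linear_combination a * ha + b * hb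
  have hsum : a * a + b * b = 0 := by
    linear_combination mul_self_eq_zero.mp hsq
  exact mul_self_add_mul_self_eq_zero.mp hsum

end NonDegenerate

/-- `SOL(Θ, q)` for `Ψ(x) = (x₁³ + x₁, x₂² + x₃², x₂² + x₃²)` and `q = (0, -1, -1)`. -/
def exampleSolutionSet : Set (ℝ × ℝ × ℝ) :=
  {x : ℝ × ℝ × ℝ | (0 ≤ x.1 ∧ 0 ≤ x.2.1 ∧ 0 ≤ x.2.2) ∧
    (0 ≤ x.1 ^ 3 + x.1 + 0 ∧ 0 ≤ x.2.1 ^ 2 + x.2.2 ^ 2 + (-1) ∧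
      0 ≤ x.2.1 ^ 2 + x.2.2 ^ 2 + (-1)) ∧
    x.1 * (x.1 ^ 3 + x.1 + 0) + x.2.1 * (x.2.1 ^ 2 + x.2.2 ^ 2 + (-1)) +
      x.2.2 * (x.2.1 ^ 2 + x.2.2 ^ 2 + (-1)) = 0}

theorem zero_mem_exampleSolutionSet_of_sq_add_sq_eq_one {a b : ℝ} (ha : 0 ≤ a) (hb : 0 ≤ b)
    (hab : a ^ 2 + b ^ 2 = 1) : ((0 : ℝ), a, b) ∈ exampleSolutionSet := by
  refine ⟨⟨le_rfl, ha, hb⟩, ⟨by norm_num, ?_, ?_⟩, ?_⟩ <;> simp only [hab] <;> norm_num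

theorem cos_sin_mem_exampleSolutionSet {t : ℝ} (ht : t ∈ Icc 0 (π / 2)) :
    ((0 : ℝ), cos t, sin t) ∈ exampleSolutionSet :=
  zero_mem_exampleSolutionSet_of_sq_add_sq_eq_one
    (cos_nonneg_of_mem_Icc ⟨by linarith [pi_pos, ht.1], ht.2⟩)
    (sin_nonneg_of_nonneg_of_le_pi ht.1 (by linarith [pi_pos, ht.2]))
    (cos_sq_add_sin_sq t)

theorem injOn_cos_sin_Icc :
    InjOn (fun t : ℝ => ((0 : ℝ), cos t, sin t)) (Icc 0 (π / 2)) := fun s hs t ht hst =>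
  injOn_cos (Icc_subset_Icc_right (by linarith [pi_pos]) hs)
    (Icc_subset_Icc_right (by linarith [pi_pos]) ht) (congrArg (·.2.1) hst)

theorem exampleSolutionSet_infinite : exampleSolutionSet.Infinite :=
  infinite_of_injOn_mapsTo injOn_cos_sin_Icc (fun _ ht => cos_sin_mem_exampleSolutionSet ht)
    (Icc_infinite (by positivity))

/-- The tensor tuple on `ℝ³` with `Ψ(x) = (x₁³+x₁, x₂²+x₃², x₂²+x₃²)` is
non-degenerate, yet for `q = (0,-1,-1)` every `(0, cos t, sin t)`, `t ∈ [0,π/2]`,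
lies in the PCP solution set, which is therefore infinite; hence a
non-degenerate tensor tuple need not have the finiteness property. -/
theorem example_nondegenerate_without_finiteness :
    (∀ x₁ x₂ x₃ : ℝ,
      x₁ * (x₁ ^ 3 + x₁) = 0 → x₂ * (x₂ ^ 2 + x₃ ^ 2) = 0 →
      x₃ * (x₂ ^ 2 + x₃ ^ 2) = 0 → x₁ = 0 ∧ x₂ = 0 ∧ x₃ = 0) ∧
    (∀ t : ℝ, 0 ≤ t → t ≤ Real.pi / 2 →
      ((0 : ℝ), Real.cos t, Real.sin t) ∈
        {x : ℝ × ℝ × ℝ | (0 ≤ x.1 ∧ 0 ≤ x.2.1 ∧ 0 ≤ x.2.2) ∧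
          (0 ≤ x.1 ^ 3 + x.1 + 0 ∧ 0 ≤ x.2.1 ^ 2 + x.2.2 ^ 2 + (-1) ∧
            0 ≤ x.2.1 ^ 2 + x.2.2 ^ 2 + (-1)) ∧
          x.1 * (x.1 ^ 3 + x.1 + 0) + x.2.1 * (x.2.1 ^ 2 + x.2.2 ^ 2 + (-1)) +
            x.2.2 * (x.2.1 ^ 2 + x.2.2 ^ 2 + (-1)) = 0}) ∧
    Set.Infinite {x : ℝ × ℝ × ℝ | (0 ≤ x.1 ∧ 0 ≤ x.2.1 ∧ 0 ≤ x.2.2) ∧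
      (0 ≤ x.1 ^ 3 + x.1 + 0 ∧ 0 ≤ x.2.1 ^ 2 + x.2.2 ^ 2 + (-1) ∧
        0 ≤ x.2.1 ^ 2 + x.2.2 ^ 2 + (-1)) ∧
      x.1 * (x.1 ^ 3 + x.1 + 0) + x.2.1 * (x.2.1 ^ 2 + x.2.2 ^ 2 + (-1)) +
        x.2.2 * (x.2.1 ^ 2 + x.2.2 ^ 2 + (-1)) = 0} := by
  refine ⟨fun x₁ x₂ x₃ h₁ h₂ h₃ => ?_, fun t ht₀ ht => ?_, exampleSolutionSet_infinite⟩
  · exact ⟨eq_zero_of_mul_pow_three_add_self_eq_zero h₁,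
      eq_zero_and_eq_zero_of_mul_sq_add_sq_eq_zero h₂ h₃⟩
  · exact cos_sin_mem_exampleSolutionSet ⟨ht₀, ht⟩
end
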